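/- arXiv:1806.09474 — 2 statements merged into one kernel-verified Lean document; each statement's English description precedes it below -/
import Mathlib

section
/- There is no perfect uncorrelated quantum strategy for the ALC task: there do not exist density operators ρ_A^x, ρ_B^y on ℂ² (for x, y ∈ {0,1}^2) and a POVM {M₀, M₁ = I − M₀} on ℂ² ⊗ ℂ² such that Tr[(ρ_A^x ⊗ ρ_B^y) M₀] = 1 whenever x = y and Tr[(ρ_A^x ⊗ ρ_B^y) M₀] = 0 whenever x ≠ y. -/
/-!
In a perfect strategy the outcome probabilities `tr (ρ M₀)` are `0` or `1` for states `ρ` and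
POVM elements `M₀`, `1 - M₀`, and a vanishing trace of a product of positive semidefinite
matrices forces the product itself to vanish. So `M₀` fixes `ρA x ⊗ ρB x` and annihilates
`ρA x ⊗ ρB y` for `y ≠ x`, whence `(ρA x)² ⊗ ρB y ρB x = 0` and the four states `ρB y` have
pairwise orthogonal supports, which is impossible in `ℂ²`.
-/

open Matrix Kronecker ComplexOrder

namespace Matrix

variable {n 𝕜 : Type*} [Fintype n] [RCLike 𝕜]

open scoped MatrixOrder in
theorem PosSemidef.mul_eq_zero_of_trace_mul_eq_zero [DecidableEq n] {A B : Matrix n n 𝕜}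
    (hA : A.PosSemidef) (hB : B.PosSemidef) (h : (A * B).trace = 0) : A * B = 0 := by
  obtain ⟨C, rfl⟩ := CStarAlgebra.nonneg_iff_eq_star_mul_self.mp hA.nonneg
  obtain ⟨D, rfl⟩ := CStarAlgebra.nonneg_iff_eq_mul_star_self.mp hB.nonneg
  rw [star_eq_conjTranspose, star_eq_conjTranspose] at h ⊢
  -- `trace (Cᴴ C D Dᴴ) = trace ((C D)ᴴ (C D))`
  have hCD : C * D = 0 := by
    rw [← trace_conjTranspose_mul_self_eq_zero_iff, conjTranspose_mul, ← h,
      ← trace_mul_cycle, Matrix.mul_assoc, Matrix.mul_assoc, Matrix.mul_assoc]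
  calc Cᴴ * C * (D * Dᴴ) = Cᴴ * (C * D) * Dᴴ := by simp only [Matrix.mul_assoc]
    _ = 0 := by rw [hCD, Matrix.mul_zero, Matrix.zero_mul]

theorem PosSemidef.mul_eq_self_of_trace_mul_eq_trace [DecidableEq n] {ρ M : Matrix n n 𝕜}
    (hρ : ρ.PosSemidef) (hM : M.IsHermitian) (hM' : (1 - M).PosSemidef)
    (h : (ρ * M).trace = ρ.trace) : M * ρ = ρ := by
  have hρM : ρ * M = ρ := by
    have := hρ.mul_eq_zero_of_trace_mul_eq_zero hM' <| by
      rw [Matrix.mul_sub, trace_sub, h, Matrix.mul_one, sub_self]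
    rwa [Matrix.mul_sub, Matrix.mul_one, sub_eq_zero, eq_comm] at this
  simpa only [conjTranspose_mul, hM.eq, hρ.1.eq] using congrArg (·ᴴ) hρM

theorem card_le_of_pairwise_conjTranspose_mul_eq_zero {ι : Type*} [Fintype ι]
    {σ : ι → Matrix n n 𝕜} (hσ : ∀ i, σ i ≠ 0) (horth : Pairwise fun i j => (σ i)ᴴ * σ j = 0) :
    Fintype.card ι ≤ Fintype.card n := by
  choose v hv using fun i => not_forall.mp (mt ext_iff_mulVec.mpr (hσ i))
  let w i : EuclideanSpace 𝕜 n := WithLp.toLp 2 (σ i *ᵥ v i)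
  have hw : LinearIndependent 𝕜 w := by
    refine linearIndependent_of_ne_zero_of_inner_eq_zero (fun i => ?_) fun i j hij => ?_
    · simpa [w] using hv i
    · simp only [w, EuclideanSpace.inner_toLp_toLp]
      rw [dotProduct_comm, star_mulVec, ← dotProduct_mulVec, mulVec_mulVec, horth hij,
        zero_mulVec, dotProduct_zero]
  simpa using hw.fintype_card_le_finrank

theorem kronecker_eq_zero_iff {R l m p q : Type*} [MulZeroClass R] [NoZeroDivisors R]
    {A : Matrix l m R} {B : Matrix p q R} : A ⊗ₖ B = 0 ↔ A = 0 ∨ B = 0 := by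
  refine ⟨fun h => ?_, by rintro (rfl | rfl) <;> simp⟩
  by_contra! ⟨hA, hB⟩
  obtain ⟨i, j, hA⟩ : ∃ i j, A i j ≠ 0 := by by_contra! hA'; exact hA (ext hA')
  obtain ⟨k, l, hB⟩ : ∃ k l, B k l ≠ 0 := by by_contra! hB'; exact hB (ext hB')
  exact mul_ne_zero hA hB (congrFun₂ h (i, k) (j, l))

end Matrix

/-- no perfect uncorrelated quantum strategy for the ALC task.
There are no qubit density operators `ρA x`, `ρB y` and a two-outcome POVM
`{M₀, 1 - M₀}` on `ℂ² ⊗ ℂ²` whose first outcome has probability `1` exactly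
when `x = y` and `0` otherwise. -/
theorem alc_no_perfect_uncorrelated_quantum_strategy :
    ¬ ∃ (ρA ρB : Bool × Bool → Matrix (Fin 2) (Fin 2) ℂ)
        (M₀ : Matrix (Fin 2 × Fin 2) (Fin 2 × Fin 2) ℂ),
      (∀ x, (ρA x).PosSemidef ∧ (ρA x).trace = 1) ∧
      (∀ y, (ρB y).PosSemidef ∧ (ρB y).trace = 1) ∧
      M₀.PosSemidef ∧ (1 - M₀).PosSemidef ∧
      (∀ x y, ((ρA x ⊗ₖ ρB y) * M₀).trace = if x = y then 1 else 0) := by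
  rintro ⟨ρA, ρB, M₀, hA, hB, hM, hM', h⟩
  have hρ x y : (ρA x ⊗ₖ ρB y).PosSemidef := (hA x).1.kronecker (hB y).1
  have hne_zero {σ : Matrix (Fin 2) (Fin 2) ℂ} (hσ : σ.trace = 1) : σ ≠ 0 := by
    rintro rfl; simp at hσ
  have hfix x : M₀ * (ρA x ⊗ₖ ρB x) = ρA x ⊗ₖ ρB x :=
    (hρ x x).mul_eq_self_of_trace_mul_eq_trace hM.1 hM' <| by
      rw [h, if_pos rfl, trace_kronecker, (hA x).2, (hB x).2, mul_one]
  have hblock x y (hxy : x ≠ y) : (ρA x ⊗ₖ ρB y) * M₀ = 0 :=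
    (hρ x y).mul_eq_zero_of_trace_mul_eq_zero hM (by rw [h, if_neg hxy])
  have horth : Pairwise fun y x => (ρB y)ᴴ * ρB x = 0 := by
    intro y x hyx
    have hkron : (ρA x * ρA x) ⊗ₖ (ρB y * ρB x) = 0 := by
      rw [mul_kronecker_mul, ← hfix x, ← Matrix.mul_assoc, hblock x y hyx.symm,
        Matrix.zero_mul]
    have hsq : ρA x * ρA x ≠ 0 := by
      simpa only [(hA x).1.1.eq] using mt conjTranspose_mul_self_eq_zero.mp (hne_zero (hA x).2)
    rw [(hB y).1.1.eq]
    exact (kronecker_eq_zero_iff.mp hkron).resolve_left hsq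
  simpa using card_le_of_pairwise_conjTranspose_mul_eq_zero (fun y => hne_zero (hB y).2) horth
end

section
/- There exists a perfect quantum entangled strategy for the ALC task: using the shared singlet state |ψ⁻⟩, local encoding by Pauli operators σ_k (with strings mapped bijectively to k ∈ {0,1,2,3}), and the verifier measuring the POVM {|ψ⁻⟩⟨ψ⁻|, I − |ψ⁻⟩⟨ψ⁻|}, the verifier's first outcome occurs with probability 1 if x = y and probability 0 if x ≠ y. -/
/-!
For 2×2 matrices, `⟨ψ⁻| A ⊗ B |ψ⁻⟩ = tr(A · adj B) / 2 = (tr A · tr B − tr (A B)) / 2`.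
The Pauli matrices are orthogonal for the trace form, and only `σ 0` has nonzero trace, so
`⟨ψ⁻| σ_a ⊗ σ_b |ψ⁻⟩ = ±δ_ab`; any bijection of two-bit strings onto `Fin 4` therefore works.
-/

open Matrix Kronecker

/-- The Pauli matrices, with `σ 0 = I`. -/
noncomputable def pauli : Fin 4 → Matrix (Fin 2) (Fin 2) ℂ
  | 0 => 1
  | 1 => !![0, 1; 1, 0]
  | 2 => !![0, -Complex.I; Complex.I, 0]
  | 3 => !![1, 0; 0, -1]

/-- The singlet state `|ψ⁻⟩ = (|01⟩ - |10⟩)/√2` as a vector on `ℂ² ⊗ ℂ²`. -/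
noncomputable def singlet : Fin 2 × Fin 2 → ℂ := fun p =>
  if p = (0, 1) then (1 : ℂ) / Real.sqrt 2
  else if p = (1, 0) then -(1 : ℂ) / Real.sqrt 2
  else 0

theorem singlet_dotProduct_kronecker_mulVec (A B : Matrix (Fin 2) (Fin 2) ℂ) :
    star singlet ⬝ᵥ ((A ⊗ₖ B) *ᵥ singlet) = (A.trace * B.trace - (A * B).trace) / 2 := by
  have h2 : ((Real.sqrt 2 : ℝ) : ℂ) ^ 2 = 2 := by
    norm_cast; exact Real.sq_sqrt (by norm_num)
  have hne : ((Real.sqrt 2 : ℝ) : ℂ) ≠ 0 := by norm_cast; positivity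
  simp [dotProduct, mulVec, Fintype.sum_prod_type, singlet, trace_fin_two, Matrix.mul_apply]
  field_simp
  rw [h2]
  ring

theorem trace_pauli (a : Fin 4) : (pauli a).trace = if a = 0 then 2 else 0 := by
  fin_cases a <;> simp [pauli, trace_fin_two]

theorem trace_pauli_mul_pauli (a b : Fin 4) :
    (pauli a * pauli b).trace = if a = b then 2 else 0 := by
  fin_cases a <;> fin_cases b <;> simp [pauli, trace_fin_two] <;> norm_num

theorem norm_singlet_pauli_kronecker_sq (a b : Fin 4) :
    ‖star singlet ⬝ᵥ ((pauli a ⊗ₖ pauli b) *ᵥ singlet)‖ ^ 2 = if a = b then 1 else 0 := by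
  rw [singlet_dotProduct_kronecker_mulVec, trace_pauli, trace_pauli, trace_pauli_mul_pauli]
  split_ifs <;> simp_all
  norm_num

/-- there is a perfect quantum entangled strategy for the ALC
task.  For some bijection from two-bit strings to Pauli indices, encoding by
local Pauli operators on the shared singlet and measuring the projector onto
the singlet gives outcome probability `|⟨ψ⁻|(σ_{f x} ⊗ σ_{f y})|ψ⁻⟩|²` equal
to `1` when `x = y` and `0` when `x ≠ y`. -/
theorem alc_perfect_quantum_entangled_strategy :
    ∃ f : (Bool × Bool) ≃ Fin 4, ∀ x y : Bool × Bool,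
      (‖star singlet ⬝ᵥ ((pauli (f x) ⊗ₖ pauli (f y)) *ᵥ singlet)‖)^2
        = if x = y then 1 else 0 := by
  refine ⟨Fintype.equivFinOfCardEq rfl, fun x y => ?_⟩
  simp only [norm_singlet_pauli_kronecker_sq, EmbeddingLike.apply_eq_iff_eq]
end
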